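/- arXiv:1202.2682 — 5 statements merged into one kernel-verified Lean document; each statement's English description precedes it below -/
import Mathlib

section
/- In the algebra of coupled scalars, for any m elements a^1, ..., a^m with a^j = Σ_i a^j_i e_i, the k-th coefficient of the product a^1 · a^2 · ... · a^m equals ∏_{j=1}^m (Σ_{r=1}^k a^j_r) − ∏_{j=1}^m (Σ_{r=1}^{k-1} a^j_r). -/
/-!
Summing coefficients over a lower set `S` of indices is multiplicative: since `max i j ∈ S`
exactly when both `i` and `j` lie in `S`, the coefficients of `a · b` summed over `S` collect
precisely the products `aᵢ bⱼ` with `i, j ∈ S`. Applying this to `S = {r ≤ k}` and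
`S = {r < k}` and subtracting isolates the `k`-th coefficient.
-/

/-- The coupled-scalar multiplication on ℝⁿ: the bilinear extension of
`e_i · e_j = e_{max(i,j)}` on basis vectors. -/
noncomputable def cmul {n : ℕ} (a b : Fin n → ℝ) : Fin n → ℝ :=
  fun k => ∑ i, ∑ j, if max i j = k then a i * b j else 0

/-- The product `a⁰ · a¹ · … · aᵐ` of `m+1` elements of the coupled-scalar algebra. -/
noncomputable def cprod {n : ℕ} : {m : ℕ} → (Fin (m + 1) → Fin n → ℝ) → Fin n → ℝ
  | 0, a => a 0
  | _ + 1, a => cmul (a 0) (cprod fun i => a i.succ)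

theorem IsLowerSet.max_mem_iff {α : Type*} [LinearOrder α] {s : Set α} (hs : IsLowerSet s)
    {x y : α} : max x y ∈ s ↔ x ∈ s ∧ y ∈ s :=
  ⟨fun h => ⟨hs (le_max_left x y) h, hs (le_max_right x y) h⟩,
    fun ⟨hx, hy⟩ => max_rec' (· ∈ s) hx hy⟩

theorem sum_cmul_of_isLowerSet {n : ℕ} (a b : Fin n → ℝ) {S : Finset (Fin n)}
    (hS : IsLowerSet (S : Set (Fin n))) :
    ∑ r ∈ S, cmul a b r = (∑ i ∈ S, a i) * ∑ j ∈ S, b j := by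
  calc ∑ r ∈ S, cmul a b r
      = ∑ i, ∑ j, ∑ r ∈ S, if max i j = r then a i * b j else 0 := by
        simp only [cmul]
        rw [Finset.sum_comm]
        exact Finset.sum_congr rfl fun i _ => Finset.sum_comm
    _ = ∑ i, ∑ j, if i ∈ S ∧ j ∈ S then a i * b j else 0 := by
        simp only [Finset.sum_ite_eq, ← Finset.mem_coe, hS.max_mem_iff]
    _ = (∑ i ∈ S, a i) * ∑ j ∈ S, b j := by
        simp only [ite_and, Finset.sum_ite_irrel, Finset.sum_const_zero, Finset.sum_ite_mem,
          Finset.univ_inter, Finset.sum_mul_sum]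

theorem sum_cprod_of_isLowerSet {n m : ℕ} (a : Fin (m + 1) → Fin n → ℝ) {S : Finset (Fin n)}
    (hS : IsLowerSet (S : Set (Fin n))) :
    ∑ r ∈ S, cprod a r = ∏ j, ∑ r ∈ S, a j r := by
  induction m with
  | zero => simp [cprod]
  | succ m ih =>
    rw [Fin.prod_univ_succ, ← ih fun i => a i.succ]
    exact sum_cmul_of_isLowerSet _ _ hS

/-- The k-th coefficient of a product of `m ≥ 1` coupled scalars equals
`∏_j (Σ_{r≤k} aʲᵣ) − ∏_j (Σ_{r<k} aʲᵣ)`. -/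
theorem coupled_scalars_prod_coeff {n m : ℕ} (a : Fin (m + 1) → Fin n → ℝ) (k : Fin n) :
    cprod a k =
      (∏ j, ∑ r ∈ Finset.Iic k, a j r) - (∏ j, ∑ r ∈ Finset.Iio k, a j r) := by
  rw [← sum_cprod_of_isLowerSet a (S := Finset.Iic k) (by simpa using isLowerSet_Iic k),
    ← sum_cprod_of_isLowerSet a (S := Finset.Iio k) (by simpa using isLowerSet_Iio k),
    ← Finset.Iio_insert, Finset.sum_insert Finset.notMem_Iio_self, add_sub_cancel_right]
end

section
/- The linear map from the algebra of coupled scalars ℝⁿ to n×n real matrices sending e_k to the matrix E_k (where (E_k)_{ij} = 1 if j = k and i ≤ k, or if j = i and i > k, and 0 otherwise) is multiplicative: E_i E_j = E_{max(i,j)} for all i, j; hence it is an injective algebra homomorphism. -/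
/-- The matrix `E_k`, with `(E_k)_{ij} = 1` iff (`j = k` and `i ≤ k`) or (`j = i` and `i > k`). -/
def Emat (n : ℕ) (k : Fin n) : Matrix (Fin n) (Fin n) ℝ :=
  Matrix.of fun i j => if (j = k ∧ i ≤ k) ∨ (j = i ∧ k < i) then 1 else 0

/-! `E_k` is the 0/1 matrix of the map `i ↦ max i k` (row `i` has its single `1` in column
`max i k`), so `E_i E_j` is the matrix of the composite `i' ↦ max (max i' i) j`, which is `E_{max i j}`
by associativity of `max`. Multiplicativity of the linear extension is then bilinearity, and
injectivity holds because row `0` of `∑ a_k E_k` is `a` itself. -/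

open Matrix

theorem Finset.sum_smul_mul_sum_smul_of_mul_eq {ι R A : Type*} [Fintype ι] [DecidableEq ι]
    [CommSemiring R] [Semiring A] [Algebra R A] (μ : ι → ι → ι) (E : ι → A)
    (hE : ∀ i j, E i * E j = E (μ i j)) (a b : ι → R) :
    (∑ i, a i • E i) * (∑ j, b j • E j) =
      ∑ k, (∑ i, ∑ j, if μ i j = k then a i * b j else 0) • E k := by
  calc (∑ i, a i • E i) * (∑ j, b j • E j) = ∑ i, ∑ j, (a i * b j) • E (μ i j) := by
        simp only [Fintype.sum_mul_sum, smul_mul_smul_comm, hE]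
    _ = _ := by
      symm
      simp only [Finset.sum_smul]
      rw [Finset.sum_comm]
      refine Finset.sum_congr rfl fun i _ => ?_
      rw [Finset.sum_comm]
      simp only [ite_smul, zero_smul, Finset.sum_ite_eq, Finset.mem_univ, if_true]

theorem Matrix.one_submatrix_id_mul {l m n α : Type*} [Fintype m] [DecidableEq m]
    [NonAssocSemiring α] (f : l → m) (M : Matrix m n α) :
    (1 : Matrix m m α).submatrix f id * M = M.submatrix f id :=
  one_submatrix_mul f (Equiv.refl m) M

lemma Emat_eq_submatrix_one (n : ℕ) (k : Fin n) :
    Emat n k = (1 : Matrix (Fin n) (Fin n) ℝ).submatrix (fun i => max i k) id := by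
  ext i j
  simp only [Emat, of_apply, submatrix_apply, id, one_apply]
  grind

lemma Emat_mul_Emat (n : ℕ) (i j : Fin n) : Emat n i * Emat n j = Emat n (max i j) := by
  simp only [Emat_eq_submatrix_one]
  rw [one_submatrix_id_mul, submatrix_submatrix, Function.comp_id]
  simp only [Function.comp_def, max_assoc]

lemma sum_smul_Emat_apply_zero (n : ℕ) (a : Fin n → ℝ) (j : Fin n) :
    (∑ k, a k • Emat n k) ⟨0, j.pos⟩ j = a j := by
  have zero_max_eq (k : Fin n) : max ⟨0, j.pos⟩ k = k := max_eq_right (Nat.zero_le _)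
  simp [Emat_eq_submatrix_one, Matrix.sum_apply, one_apply, zero_max_eq]

lemma sum_smul_Emat_injective (n : ℕ) :
    Function.Injective (fun a : Fin n → ℝ => ∑ k, a k • Emat n k) := fun a b hab =>
  funext fun j => by
    simpa only [sum_smul_Emat_apply_zero] using congrFun (congrFun hab ⟨0, j.pos⟩) j

/-- The linear map `e_k ↦ E_k` is multiplicative (`E_i E_j = E_{max(i,j)}`), hence an
injective algebra homomorphism from the algebra of coupled scalars to `n×n` matrices. -/
theorem Emat_repr (n : ℕ) :
    (∀ i j : Fin n, Emat n i * Emat n j = Emat n (max i j)) ∧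
    Function.Injective (fun a : Fin n → ℝ => ∑ k, a k • Emat n k) ∧
    (∀ a b : Fin n → ℝ,
      ∑ k, cmul a b k • Emat n k = (∑ k, a k • Emat n k) * (∑ k, b k • Emat n k)) :=
  ⟨Emat_mul_Emat n, sum_smul_Emat_injective n, fun a b =>
    (Finset.sum_smul_mul_sum_smul_of_mul_eq max (Emat n) (Emat_mul_Emat n) a b).symm⟩
end

section
/- For a general element A = Σ_{k=1}^n a_k E_k of the pseudo-scalar matrix algebra, the conjugate S⁻¹ A S is the diagonal matrix whose j-th diagonal entry is the partial sum a_1 + a_2 + ... + a_j. -/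
/-- The upper-triangular all-ones matrix `S`. -/
def Smat (n : ℕ) : Matrix (Fin n) (Fin n) ℝ :=
  Matrix.of fun i j => if i ≤ j then 1 else 0

open Matrix

lemma Emat_apply (n : ℕ) (k i l : Fin n) :
    Emat n k i l = if l = max i k then 1 else 0 := by
  unfold Emat
  rcases le_or_gt i k with h | h
  · simp [h, not_lt.mpr h]
  · simp [h, max_eq_left h.le, not_le.mpr h]

lemma Emat_mul (n : ℕ) (k : Fin n) (M : Matrix (Fin n) (Fin n) ℝ) :
    Emat n k * M = M.submatrix (max · k) id := by
  ext i j
  simp [mul_apply, Emat_apply]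

lemma Smat_submatrix_max (n : ℕ) (k : Fin n) :
    (Smat n).submatrix (max · k) id = Smat n * diagonal fun j => if k ≤ j then 1 else 0 := by
  ext i j
  simp only [Smat, submatrix_apply, of_apply, id, mul_diagonal, max_le_iff,
    ite_zero_mul_ite_zero, one_mul]

lemma det_Smat (n : ℕ) : (Smat n).det = 1 := by
  rw [det_of_isUpperTriangular]
  · simp [Smat]
  · intro i j (h : j < i)
    simp [Smat, h]

lemma Smat_inv_mul_Emat_mul_Smat (n : ℕ) (k : Fin n) :
    (Smat n)⁻¹ * Emat n k * Smat n = diagonal fun j => if k ≤ j then 1 else 0 := by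
  rw [Matrix.mul_assoc, Emat_mul, Smat_submatrix_max, ← Matrix.mul_assoc,
    nonsing_inv_mul _ (by simp [det_Smat]), Matrix.one_mul]

/-- For `A = Σ aₖ Eₖ`, the conjugate `S⁻¹ A S` is diagonal with `j`-th entry `a₁ + ⋯ + aⱼ`. -/
theorem conj_general (n : ℕ) (a : Fin n → ℝ) :
    (Smat n)⁻¹ * (∑ k, a k • Emat n k) * Smat n =
      Matrix.diagonal (fun j => ∑ i ∈ Finset.Iic j, a i) := by
  simp only [Matrix.mul_sum, Matrix.sum_mul, Matrix.mul_smul, Matrix.smul_mul,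
    Smat_inv_mul_Emat_mul_Smat]
  ext i j
  simp [Matrix.sum_apply, diagonal_apply, Finset.sum_ite, Finset.filter_ge_eq_Iic]
end

section
/- In the algebra of coupled scalars ℝⁿ, an element a = Σ a_i e_i is invertible if and only if all partial sums Σ_{r=1}^k a_r, k = 1, ..., n, are nonzero. -/
open Finset

section PartialSums

variable {ι : Type*} [PartialOrder ι] [LocallyFiniteOrderBot ι]

def partialSums (R : Type*) [Semiring R] : (ι → R) →ₗ[R] (ι → R) where
  toFun c k := ∑ r ∈ Iic k, c r
  map_add' c d := by ext k; simp [sum_add_distrib]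
  map_smul' r c := by ext k; simp [mul_sum]

@[simp]
theorem partialSums_apply {R : Type*} [Semiring R] (c : ι → R) (k : ι) :
    partialSums R c k = ∑ r ∈ Iic k, c r :=
  rfl

theorem partialSums_injective [WellFoundedLT ι] (R : Type*) [Ring R] :
    Function.Injective (partialSums (ι := ι) R) := by
  classical
  refine (injective_iff_map_eq_zero _).2 fun c hc => funext fun k => ?_
  induction k using WellFoundedLT.induction with
  | _ k ih =>
    have hk := congr_fun hc k
    rwa [partialSums_apply, ← Iio_insert, sum_insert notMem_Iio_self,
      sum_eq_zero fun r hr => ih r (mem_Iio.1 hr), add_zero] at hk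

theorem partialSums_surjective [Fintype ι] [WellFoundedLT ι] (K : Type*) [Field K] :
    Function.Surjective (partialSums (ι := ι) K) :=
  LinearMap.injective_iff_surjective.1 (partialSums_injective K)

end PartialSums

theorem partialSums_cmul {n : ℕ} (a b : Fin n → ℝ) :
    partialSums ℝ (cmul a b) = partialSums ℝ a * partialSums ℝ b := by
  classical
  ext k
  have hmax (i j : Fin n) :
      ∑ m ∈ Iic k, (if max i j = m then a i * b j else 0)
        = (if i ∈ Iic k then a i else 0) * (if j ∈ Iic k then b j else 0) := by
    simp only [sum_ite_eq, mem_Iic, max_le_iff, ite_zero_mul_ite_zero]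
  calc ∑ m ∈ Iic k, ∑ i, ∑ j, (if max i j = m then a i * b j else 0)
      = ∑ i, ∑ j, ∑ m ∈ Iic k, (if max i j = m then a i * b j else 0) := by
        rw [sum_comm]; exact sum_congr rfl fun i _ => sum_comm
    _ = (∑ i ∈ Iic k, a i) * ∑ j ∈ Iic k, b j := by
        simp only [hmax, ← sum_mul_sum, Fintype.sum_ite_mem]

theorem partialSums_single_zero {n : ℕ} [NeZero n] :
    partialSums ℝ (Pi.single (0 : Fin n) (1 : ℝ)) = 1 := by
  ext k
  simp [sum_pi_single']

theorem cmul_eq_single_zero_iff {n : ℕ} [NeZero n] (a b : Fin n → ℝ) :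
    cmul a b = Pi.single 0 1 ↔ partialSums ℝ a * partialSums ℝ b = 1 := by
  rw [← partialSums_single_zero, ← partialSums_cmul]
  exact (partialSums_injective ℝ).eq_iff.symm

/-- `a` is invertible in the coupled-scalar algebra (with unit `e₁`) iff all partial sums
`Σ_{r≤k} aᵣ` are nonzero. -/
theorem coupled_scalars_invertible {n : ℕ} [NeZero n] (a : Fin n → ℝ) :
    (∃ b : Fin n → ℝ, cmul a b = Pi.single (0 : Fin n) (1 : ℝ) ∧
        cmul b a = Pi.single (0 : Fin n) (1 : ℝ)) ↔
      ∀ k : Fin n, (∑ r ∈ Finset.Iic k, a r) ≠ 0 := by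
  simp_rw [cmul_eq_single_zero_iff]
  rw [← (partialSums_surjective ℝ).exists (p := fun c => partialSums ℝ a * c = 1 ∧
    c * partialSums ℝ a = 1), ← isUnit_iff_exists, Pi.isUnit_iff]
  exact forall_congr' fun k => isUnit_iff_ne_zero
end

section
/- Let 𝔤 be a Lie algebra over ℝ and consider the tensor product Lie algebra ps(n) ⊗ 𝔤, where ps(n) is the commutative associative pseudo-scalar matrix algebra spanned by E_1, ..., E_n, with Lie bracket [a⊗X, b⊗Y] = (ab) ⊗ [X,Y]. Then the linear map T(Σ_k E_k ⊗ A_k) = Σ_k D_k ⊗ A_k, where D_k is diagonal with (D_k)_{jj} = 1 for j ≥ k and 0 otherwise, is a Lie algebra isomorphism from ps(n) ⊗ 𝔤 onto the image, and identifies ps(n) ⊗ 𝔤 with the direct sum of n copies of 𝔤 via the components Ã_k = Σ_{i=1}^k A_i. -/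
/-!
The partial-sum map `A ↦ Ã` is unitriangular, hence invertible by forward substitution
(`A_k = Ã_k - Ã_{k-1}`). For the bracket, the `k`-th partial sum of `[A, B]` collects the
terms `[A_i, B_j]` with `max i j ≤ k`, i.e. with `i ≤ k` and `j ≤ k`, which is exactly
`[Ã_k, B̃_k]` by bilinearity.
-/

/-- The bracket on `ps(n) ⊗ 𝔤 ≅ Fin n → 𝔤` (components with respect to the basis
`E_1, …, E_n` of the pseudo-scalar algebra, `E_i E_j = E_{max(i,j)}`), given by the
bilinear extension of `[E_i ⊗ X, E_j ⊗ Y] = E_{max(i,j)} ⊗ [X, Y]`. -/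
def coupledBracket {n : ℕ} {g : Type*} [LieRing g] (A B : Fin n → g) : Fin n → g :=
  fun k => ∑ i, ∑ j, if max i j = k then ⁅A i, B j⁆ else 0

/-- The decoupling map `T(Σ E_k ⊗ A_k) = Σ D_k ⊗ A_k`; since `D_k` is diagonal with
`(D_k)_{jj} = 1` for `j ≥ k`, in components it sends `(A_k)` to the partial sums
`Ã_k = Σ_{i≤k} A_i`. -/
def decouple {n : ℕ} {g : Type*} [LieRing g] (A : Fin n → g) : Fin n → g :=
  fun k => ∑ i ∈ Finset.Iic k, A i

open Finset

theorem sum_Iic_ite_max_eq {ι M : Type*} [LinearOrder ι] [LocallyFiniteOrderBot ι]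
    [AddCommMonoid M] (i j k : ι) (x : M) :
    ∑ m ∈ Iic k, (if max i j = m then x else 0) = if i ≤ k ∧ j ≤ k then x else 0 := by
  simp only [sum_ite_eq, mem_Iic, max_le_iff]

section

variable {n : ℕ} {g : Type*} [LieRing g]

theorem decouple_apply_eq_add_sum_Iio (A : Fin n → g) (k : Fin n) :
    decouple A k = A k + ∑ i ∈ Iio k, A i := by
  rw [decouple, Iic_eq_cons_Iio, sum_cons]

theorem decouple_add (A B : Fin n → g) : decouple (A + B) = decouple A + decouple B := by
  funext k
  simp only [decouple, Pi.add_apply, sum_add_distrib]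

theorem decouple_smul {R : Type*} [DistribSMul R g] (c : R) (A : Fin n → g) :
    decouple (c • A) = c • decouple A := by
  funext k
  simp only [decouple, Pi.smul_apply, smul_sum]

def recouple (B : Fin n → g) (k : Fin n) : g :=
  B k - ∑ i : Iio k, recouple B i
termination_by k
decreasing_by exact Fin.lt_def.mp (mem_Iio.mp i.2)

theorem recouple_apply_add_sum_Iio (B : Fin n → g) (k : Fin n) :
    recouple B k + ∑ i ∈ Iio k, recouple B i = B k := by
  rw [recouple, ← sum_coe_sort (Iio k), sub_add_cancel]

theorem decouple_recouple (B : Fin n → g) : decouple (recouple B) = B := by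
  funext k
  rw [decouple_apply_eq_add_sum_Iio, recouple_apply_add_sum_Iio]

theorem recouple_decouple (A : Fin n → g) : recouple (decouple A) = A := by
  funext k
  induction k using WellFoundedLT.induction with
  | _ k ih =>
    have hsum : ∑ i ∈ Iio k, recouple (decouple A) i = ∑ i ∈ Iio k, A i :=
      sum_congr rfl fun i hi => ih i (mem_Iio.mp hi)
    have h := recouple_apply_add_sum_Iio (decouple A) k
    rwa [hsum, decouple_apply_eq_add_sum_Iio, add_left_inj] at h

theorem decouple_bijective : Function.Bijective (decouple (n := n) (g := g)) :=
  ⟨Function.LeftInverse.injective recouple_decouple,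
    Function.RightInverse.surjective decouple_recouple⟩

theorem decouple_coupledBracket_apply (A B : Fin n → g) (k : Fin n) :
    decouple (coupledBracket A B) k = ⁅decouple A k, decouple B k⁆ :=
  calc ∑ m ∈ Iic k, ∑ i, ∑ j, (if max i j = m then ⁅A i, B j⁆ else 0)
      = ∑ i, ∑ j, ∑ m ∈ Iic k, (if max i j = m then ⁅A i, B j⁆ else 0) := by
        rw [sum_comm]
        exact sum_congr rfl fun i _ => sum_comm
    _ = ∑ i, ∑ j, (if i ≤ k ∧ j ≤ k then ⁅A i, B j⁆ else 0) := by
        simp only [sum_Iic_ite_max_eq]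
    _ = ∑ i ∈ Iic k, ∑ j ∈ Iic k, ⁅A i, B j⁆ := by
        simp only [← filter_ge_eq_Iic, sum_filter, ite_and, sum_ite_irrel, sum_const_zero]
    _ = ⁅decouple A k, decouple B k⁆ := (sum_lie_sum _ _ _ _).symm

end

/-- `T` is a linear bijection from `ps(n) ⊗ 𝔤` onto the direct sum of `n` copies of `𝔤`,
turning the coupled bracket into the componentwise (direct-sum) bracket: it is a Lie
algebra isomorphism. -/
theorem decouple_lie_iso {n : ℕ} (g : Type*) [LieRing g] [LieAlgebra ℝ g] :
    Function.Bijective (decouple (n := n) (g := g)) ∧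
    (∀ A B : Fin n → g, decouple (A + B) = decouple A + decouple B) ∧
    (∀ (c : ℝ) (A : Fin n → g), decouple (c • A) = c • decouple A) ∧
    (∀ (A B : Fin n → g) (k : Fin n),
      decouple (coupledBracket A B) k = ⁅decouple A k, decouple B k⁆) :=
  ⟨decouple_bijective, decouple_add, decouple_smul, decouple_coupledBracket_apply⟩
end
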